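/- arXiv:solv-int/9908007 — 6 statements merged into one kernel-verified Lean document; each statement's English description precedes it below -/
import Mathlib

section
/- Let ψ, φ be smooth functions and define sequences (a_n) by a_0 = φ, a_n = a_{n-1}' + ψ·Σ_{i+j=n-2, i,j≥0} a_i a_j. Define τ_1 = a_0 and τ_2 = a_0 a_2 − a_1². Then τ_2''·τ_2 − (τ_2')² = τ_1·τ_3 − ψφ·τ_2², where τ_3 is the 3×3 Hankel determinant det(a_{i+j})_{0≤i,j≤2}. -/
theorem toda_hankel_n2
    (ψ φ : ℝ → ℝ) (hψ : ContDiff ℝ (⊤ : ℕ∞) ψ) (hφ : ContDiff ℝ (⊤ : ℕ∞) φ)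
    (a : ℕ → ℝ → ℝ)
    (ha0 : a 0 = φ)
    (ha : ∀ n : ℕ, a (n + 1) =
      deriv (a n) + ψ * ∑ i ∈ Finset.range n, a i * a (n - 1 - i))
    (τ₁ τ₂ τ₃ : ℝ → ℝ)
    (hτ₁ : τ₁ = a 0)
    (hτ₂ : τ₂ = a 0 * a 2 - (a 1) ^ 2)
    (hτ₃ : ∀ x : ℝ, τ₃ x =
      Matrix.det (Matrix.of fun i j : Fin 3 => a (i.val + j.val) x)) :
    ∀ x : ℝ, deriv (deriv τ₂) x * τ₂ x - (deriv τ₂ x) ^ 2 =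
      τ₁ x * τ₃ x - ψ x * φ x * (τ₂ x) ^ 2 := by
  have hψ' : ContDiff ℝ (⊤ : ℕ∞) ψ := hψ.of_le (by simp)
  have s0 : ContDiff ℝ (⊤ : ℕ∞) (a 0) := by rw [ha0]; exact hφ.of_le (by simp)
  have h1 : a 1 = deriv (a 0) := by simpa using ha 0
  have s1 : ContDiff ℝ (⊤ : ℕ∞) (a 1) := by rw [h1]; exact (contDiff_infty_iff_deriv.mp s0).2
  have h2 : a 2 = deriv (a 1) + ψ * (a 0 * a 0) := by
    have := ha 1; simpa [Finset.sum_range_one] using this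
  have s2 : ContDiff ℝ (⊤ : ℕ∞) (a 2) := by
    rw [h2]; exact (contDiff_infty_iff_deriv.mp s1).2.add (hψ'.mul (s0.mul s0))
  have h3 : a 3 = deriv (a 2) + ψ * (a 0 * a 1 + a 1 * a 0) := by
    have := ha 2; simpa [Finset.sum_range_succ, Finset.sum_range_one] using this
  have s3 : ContDiff ℝ (⊤ : ℕ∞) (a 3) := by
    rw [h3]; exact (contDiff_infty_iff_deriv.mp s2).2.add
      (hψ'.mul ((s0.mul s1).add (s1.mul s0)))
  have h4 : a 4 = deriv (a 3) + ψ * (a 0 * a 2 + a 1 * a 1 + a 2 * a 0) := by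
    have := ha 3
    simpa [Finset.sum_range_succ, Finset.sum_range_one, add_assoc] using this
  have d0 : Differentiable ℝ (a 0) := (contDiff_infty_iff_deriv.mp s0).1
  have d1 : Differentiable ℝ (a 1) := (contDiff_infty_iff_deriv.mp s1).1
  have d2 : Differentiable ℝ (a 2) := (contDiff_infty_iff_deriv.mp s2).1
  have d3 : Differentiable ℝ (a 3) := (contDiff_infty_iff_deriv.mp s3).1
  have hd0 : ∀ x, deriv (a 0) x = a 1 x := fun x => (congrFun h1 x).symm
  have hd1 : ∀ x, deriv (a 1) x = a 2 x - ψ x * (a 0 x * a 0 x) := by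
    intro x
    have := congrFun h2 x
    simp only [Pi.add_apply, Pi.mul_apply] at this
    linarith
  have hd2 : ∀ x, deriv (a 2) x = a 3 x - ψ x * (a 0 x * a 1 x + a 1 x * a 0 x) := by
    intro x
    have := congrFun h3 x
    simp only [Pi.add_apply, Pi.mul_apply] at this
    linarith
  have hd3 : ∀ x, deriv (a 3) x =
      a 4 x - ψ x * (a 0 x * a 2 x + a 1 x * a 1 x + a 2 x * a 0 x) := by
    intro x
    have := congrFun h4 x
    simp only [Pi.add_apply, Pi.mul_apply] at this
    linarith
  have hτ₂fun : τ₂ = fun x => a 0 x * a 2 x - a 1 x ^ 2 := by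
    funext x; rw [hτ₂]; simp
  have hdτ : deriv τ₂ = fun x => a 0 x * a 3 x - a 1 x * a 2 x := by
    funext x
    have hD : HasDerivAt (fun y => a 0 y * a 2 y - a 1 y ^ 2)
        (deriv (a 0) x * a 2 x + a 0 x * deriv (a 2) x
          - (2 : ℕ) * a 1 x ^ 1 * deriv (a 1) x) x :=
      (((d0 x).hasDerivAt.mul (d2 x).hasDerivAt).sub ((d1 x).hasDerivAt.pow 2))
    rw [hτ₂fun, hD.deriv, hd0, hd1, hd2]
    push_cast
    ring
  intro x
  have hDD : HasDerivAt (fun y => a 0 y * a 3 y - a 1 y * a 2 y)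
      (deriv (a 0) x * a 3 x + a 0 x * deriv (a 3) x
        - (deriv (a 1) x * a 2 x + a 1 x * deriv (a 2) x)) x :=
    (((d0 x).hasDerivAt.mul (d3 x).hasDerivAt).sub
      ((d1 x).hasDerivAt.mul (d2 x).hasDerivAt))
  have hdd : deriv (deriv τ₂) x =
      deriv (a 0) x * a 3 x + a 0 x * deriv (a 3) x
        - (deriv (a 1) x * a 2 x + a 1 x * deriv (a 2) x) := by
    rw [hdτ]; exact hDD.deriv
  have hφx : φ x = a 0 x := by rw [ha0]
  rw [hdd, hdτ, hτ₁, hτ₃ x, hτ₂fun, hφx, hd0, hd1, hd2, hd3,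
    Matrix.det_fin_three]
  simp only [Matrix.of_apply]
  norm_num
  ring
end

section
/- Let D be the determinant of an (n+1)×(n+1) matrix X over a commutative ring, and for index sets let D(i₁,…,i_k; j₁,…,j_k) denote the minor obtained by deleting rows i₁,…,i_k and columns j₁,…,j_k. Then D(n;n)·D(n+1;n+1) − D(n;n+1)·D(n+1;n) = D·D(n,n+1;n,n+1) (Jacobi's / Desnanot–Jacobi / Lewis Carroll identity for the last two rows and columns). -/
open Matrix Polynomial

private theorem dj_aux {R : Type*} [CommRing R] {n : ℕ}
    (X : Matrix (Fin (n + 2)) (Fin (n + 2)) R) (hX : IsLeftRegular X.det) :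
    (X.submatrix (Fin.succAbove (Fin.castSucc (Fin.last n)))
        (Fin.succAbove (Fin.castSucc (Fin.last n)))).det *
      (X.submatrix (Fin.succAbove (Fin.last (n + 1)))
        (Fin.succAbove (Fin.last (n + 1)))).det -
    (X.submatrix (Fin.succAbove (Fin.castSucc (Fin.last n)))
        (Fin.succAbove (Fin.last (n + 1)))).det *
      (X.submatrix (Fin.succAbove (Fin.last (n + 1)))
        (Fin.succAbove (Fin.castSucc (Fin.last n)))).det =
    X.det *
      (X.submatrix (fun k : Fin n => k.castSucc.castSucc)
        (fun k : Fin n => k.castSucc.castSucc)).det := by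
  classical
  set A : Fin (n + 2) := Fin.castSucc (Fin.last n) with hA
  set B : Fin (n + 2) := Fin.last (n + 1) with hB
  let e : Fin n ⊕ Fin 2 ≃ Fin (n + 2) := finSumFinEquiv
  set Y : Matrix (Fin n ⊕ Fin 2) (Fin n ⊕ Fin 2) R := X.submatrix e e with hY
  set Z : Matrix (Fin n ⊕ Fin 2) (Fin n ⊕ Fin 2) R := X.adjugate.submatrix e e with hZ
  have hYZ : Y * Z = X.det • 1 := by
    rw [hY, hZ, Matrix.submatrix_mul_equiv, Matrix.mul_adjugate]
    ext i j
    simp [Matrix.one_apply, e.injective.eq_iff]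
  have hYZ' : ∀ i j, (Y * Z) i j = X.det * (if i = j then 1 else 0) := by
    intro i j
    rw [hYZ]
    simp [Matrix.one_apply, mul_ite]
  have h12 : Y.toBlocks₁₁ * Z.toBlocks₁₂ + Y.toBlocks₁₂ * Z.toBlocks₂₂ = 0 := by
    ext i j
    have := hYZ' (Sum.inl i) (Sum.inr j)
    simpa [Matrix.mul_apply, Fintype.sum_sum_type, Matrix.toBlocks₁₁, Matrix.toBlocks₁₂,
      Matrix.toBlocks₂₂] using this
  have h22 : Y.toBlocks₂₁ * Z.toBlocks₁₂ + Y.toBlocks₂₂ * Z.toBlocks₂₂ = X.det • 1 := by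
    ext i j
    have := hYZ' (Sum.inr i) (Sum.inr j)
    simp only [Matrix.mul_apply, Fintype.sum_sum_type, Matrix.toBlocks₂₁, Matrix.toBlocks₁₂,
      Matrix.toBlocks₂₂, Matrix.add_apply, Matrix.of_apply, Matrix.smul_apply,
      Matrix.one_apply, smul_eq_mul, Sum.inr.injEq] at *
    simpa using this
  have hYM : Y * Matrix.fromBlocks 1 Z.toBlocks₁₂ 0 Z.toBlocks₂₂ =
      Matrix.fromBlocks Y.toBlocks₁₁ 0 Y.toBlocks₂₁ (X.det • 1) := by
    conv_lhs => rw [← Matrix.fromBlocks_toBlocks Y]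
    rw [Matrix.fromBlocks_multiply, Matrix.mul_one, Matrix.mul_one, Matrix.mul_zero,
      Matrix.mul_zero, add_zero, add_zero, h12, h22]
  have hdet := congrArg Matrix.det hYM
  rw [Matrix.det_mul, Matrix.det_fromBlocks_zero₂₁, Matrix.det_one, one_mul,
    Matrix.det_fromBlocks_zero₁₂, Matrix.det_smul, Matrix.det_one, mul_one,
    Fintype.card_fin] at hdet
  have hdetY : Y.det = X.det := Matrix.det_submatrix_equiv_self e X
  rw [hdetY] at hdet
  -- cancel one factor of X.det
  have hcancel : Z.toBlocks₂₂.det =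
      X.det * Y.toBlocks₁₁.det :=
    hX (show X.det * Z.toBlocks₂₂.det = X.det * (X.det * Y.toBlocks₁₁.det) by rw [hdet]; ring)
  have e0 : e (Sum.inr 0) = A := by
    ext; simp [e, A]
  have e1 : e (Sum.inr 1) = B := by
    ext; simp [e, B]
  have hZdet : Z.toBlocks₂₂.det =
      X.adjugate A A * X.adjugate B B - X.adjugate A B * X.adjugate B A := by
    rw [Matrix.det_fin_two]
    simp [Matrix.toBlocks₂₂, hZ, e0, e1]
  have hcorner : Y.toBlocks₁₁ = X.submatrix (fun k : Fin n => k.castSucc.castSucc)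
      (fun k : Fin n => k.castSucc.castSucc) := by
    ext i j
    simp only [Matrix.toBlocks₁₁, Matrix.of_apply, hY, Matrix.submatrix_apply]
    congr 1
  -- translate adjugate entries to minors
  have hvA : (A : ℕ) = n := rfl
  have hvB : (B : ℕ) = n + 1 := rfl
  have hAA : X.adjugate A A =
      (X.submatrix (Fin.succAbove A) (Fin.succAbove A)).det := by
    rw [Matrix.adjugate_fin_succ_eq_det_submatrix, hvA,
      Even.neg_one_pow ⟨n, rfl⟩, one_mul]
  have hBB : X.adjugate B B =
      (X.submatrix (Fin.succAbove B) (Fin.succAbove B)).det := by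
    rw [Matrix.adjugate_fin_succ_eq_det_submatrix, hvB,
      Even.neg_one_pow ⟨n + 1, rfl⟩, one_mul]
  have hAB : X.adjugate A B =
      -(X.submatrix (Fin.succAbove B) (Fin.succAbove A)).det := by
    rw [Matrix.adjugate_fin_succ_eq_det_submatrix, hvA, hvB,
      Odd.neg_one_pow ⟨n, by ring⟩, neg_one_mul]
  have hBA : X.adjugate B A =
      -(X.submatrix (Fin.succAbove A) (Fin.succAbove B)).det := by
    rw [Matrix.adjugate_fin_succ_eq_det_submatrix, hvA, hvB,
      Odd.neg_one_pow ⟨n, by ring⟩, neg_one_mul]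
  have := hcancel
  rw [hZdet, hcorner, hAA, hBB, hAB, hBA] at this
  rw [← this]; ring

/-- Desnanot–Jacobi (Lewis Carroll) identity for the last two rows and columns.
`X` is an `(n+2) × (n+2)` matrix (the paper's `(n+1) × (n+1)` with `n ≥ 1`);
rows/columns `A = n` and `B = n+1` (0-indexed) are the last two. -/
theorem desnanot_jacobi_last {R : Type*} [CommRing R] {n : ℕ}
    (X : Matrix (Fin (n + 2)) (Fin (n + 2)) R) :
    (X.submatrix (Fin.succAbove (Fin.castSucc (Fin.last n)))
        (Fin.succAbove (Fin.castSucc (Fin.last n)))).det *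
      (X.submatrix (Fin.succAbove (Fin.last (n + 1)))
        (Fin.succAbove (Fin.last (n + 1)))).det -
    (X.submatrix (Fin.succAbove (Fin.castSucc (Fin.last n)))
        (Fin.succAbove (Fin.last (n + 1)))).det *
      (X.submatrix (Fin.succAbove (Fin.last (n + 1)))
        (Fin.succAbove (Fin.castSucc (Fin.last n)))).det =
    X.det *
      (X.submatrix (fun k : Fin n => k.castSucc.castSucc)
        (fun k : Fin n => k.castSucc.castSucc)).det := by
  let f : R[X] →+* R := Polynomial.evalRingHom 0
  let gX : Matrix (Fin (n + 2)) (Fin (n + 2)) R[X] :=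
    X.map Polynomial.C + (Polynomial.X : R[X]) • 1
  have hreg : IsLeftRegular gX.det := by
    refine (Polynomial.Monic.isRegular ?_).left
    simp only [gX, Polynomial.Monic.def, ← Polynomial.leadingCoeff_det_X_one_add_C X, add_comm]
  have hmap : gX.map f = X := by
    ext i j
    simp [gX, f, Matrix.one_apply, apply_ite]
  have key := congrArg f (dj_aux gX hreg)
  simp only [_root_.map_sub, _root_.map_mul, RingHom.map_det, RingHom.mapMatrix_apply,
    ← Matrix.submatrix_map, hmap] at key
  exact key
end

section
/- Conversely, if τ : ℤ → (ℝ → ℝ) satisfies τ_n''·τ_n − (τ_n')² = τ_{n+1}·τ_{n−1} − ψφ·τ_n² with τ_0 = 1, and σ_0 is a nowhere-vanishing smooth function with (log σ_0)'' = ψφ, then σ_n := σ_0·τ_n satisfies the bilinear Toda equation σ_n''·σ_n − (σ_n')² = σ_{n+1}·σ_{n−1} for all n. -/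
lemma hirota_mul (f g : ℝ → ℝ) (hf : ContDiff ℝ (⊤ : ℕ∞) f) (hg : ContDiff ℝ (⊤ : ℕ∞) g) (x : ℝ) :
    deriv (deriv (f * g)) x * (f * g) x - (deriv (f * g) x) ^ 2 =
      (deriv (deriv f) x * f x - (deriv f x) ^ 2) * (g x) ^ 2 +
      (f x) ^ 2 * (deriv (deriv g) x * g x - (deriv g x) ^ 2) := by
  have hfd : Differentiable ℝ f := hf.differentiable (by simp)
  have hgd : Differentiable ℝ g := hg.differentiable (by simp)
  have hfd' : Differentiable ℝ (deriv f) :=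
    ((contDiff_infty_iff_deriv.mp (hf.of_le (by simp))).2).differentiable (by norm_num)
  have hgd' : Differentiable ℝ (deriv g) :=
    ((contDiff_infty_iff_deriv.mp (hg.of_le (by simp))).2).differentiable (by norm_num)
  have h1 : deriv (f * g) = fun y => deriv f y * g y + f y * deriv g y := by
    funext y
    rw [show (f * g) = fun z => f z * g z from rfl, deriv_fun_mul (hfd y) (hgd y)]
  rw [h1]
  have h2 : deriv (fun y => deriv f y * g y + f y * deriv g y) x =
      deriv (deriv f) x * g x + deriv f x * deriv g x +
        (deriv f x * deriv g x + f x * deriv (deriv g) x) := by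
    rw [deriv_fun_add (f := fun y => deriv f y * g y) (g := fun y => f y * deriv g y) ((hfd' x).mul (hgd x)) ((hfd x).mul (hgd' x)),
      deriv_fun_mul (hfd' x) (hgd x), deriv_fun_mul (hfd x) (hgd' x)]
  rw [h2]
  simp only [Pi.mul_apply, Pi.add_apply]
  ring

theorem tau_to_toda_form
    (ψ φ : ℝ → ℝ) (hψ : ContDiff ℝ (⊤ : ℕ∞) ψ) (hφ : ContDiff ℝ (⊤ : ℕ∞) φ)
    (τ : ℤ → ℝ → ℝ) (hτsmooth : ∀ n : ℤ, ContDiff ℝ (⊤ : ℕ∞) (τ n))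
    (hτ0 : τ 0 = 1)
    (hτtoda : ∀ n : ℤ, ∀ x : ℝ,
      deriv (deriv (τ n)) x * τ n x - (deriv (τ n) x) ^ 2 =
        τ (n + 1) x * τ (n - 1) x - ψ x * φ x * (τ n x) ^ 2)
    (σ₀ : ℝ → ℝ) (hσ₀smooth : ContDiff ℝ (⊤ : ℕ∞) σ₀)
    (hσ₀ne : ∀ x : ℝ, σ₀ x ≠ 0)
    (hlog : ∀ x : ℝ,
      deriv (deriv σ₀) x * σ₀ x - (deriv σ₀ x) ^ 2 = ψ x * φ x * (σ₀ x) ^ 2)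
    (σ : ℤ → ℝ → ℝ) (hσ : ∀ n : ℤ, σ n = σ₀ * τ n) :
    ∀ n : ℤ, ∀ x : ℝ,
      deriv (deriv (σ n)) x * σ n x - (deriv (σ n) x) ^ 2 =
        σ (n + 1) x * σ (n - 1) x := by
  intro n x
  rw [hσ n, hσ (n + 1), hσ (n - 1),
    hirota_mul σ₀ (τ n) hσ₀smooth (hτsmooth n) x, hlog x, hτtoda n x]
  simp only [Pi.mul_apply]
  ring
end

section
/- With the definitions of the discrete recursion c_k^l (c_0^l = Φ^l, c_k^l = (c_{k−1}^l − c_{k−1}^{l−1})/ε + Ψ^{l−2}·Σ_{i+j=k−2}(c_i^l − ε c_{i+1}^l)c_j^{l−1}), define C_k^l = c_k^l + εΨ^{l−2}·Σ_{i=1}^{k} c_{k−i}^l·c_{i−1}^{l−1}. Then C_k^{l+1} satisfies the recursion C_0^{l+1} = c_0^{l+1} and C_k^{l+1} = c_k^{l+1} + εΨ^{l−1}·Σ_{j=0}^{k−1}(c_{k−1−j}^{l+1} − ε c_{k−j}^{l+1})·C_j^{l+1}. -/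
open Finset

-- symmetry of triple convolution: swap roles of a and d
lemma tri_conv (a b d : ℕ → ℝ) (k : ℕ) :
    ∑ j ∈ range (k+1), ∑ i ∈ range j, d (k-j) * (a i * b (j-1-i))
      = ∑ j ∈ range (k+1), ∑ i ∈ range j, a (k-j) * (d i * b (j-1-i)) := by
  rw [Finset.sum_sigma', Finset.sum_sigma']
  refine Finset.sum_nbij' (fun p => ⟨k - p.2, k - p.1⟩) (fun p => ⟨k - p.2, k - p.1⟩)
    ?_ ?_ ?_ ?_ ?_
  · intro p hp; simp only [mem_sigma, mem_range] at hp ⊢; omega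
  · intro p hp; simp only [mem_sigma, mem_range] at hp ⊢; omega
  · intro p hp; simp only [mem_sigma, mem_range] at hp
    ext <;> simp <;> omega
  · intro p hp; simp only [mem_sigma, mem_range] at hp
    ext <;> simp <;> omega
  · intro p hp; simp only [mem_sigma, mem_range] at hp
    simp only
    rw [show k - (k - p.2) = p.2 by omega, show k - p.2 - 1 - (k - p.1) = p.1 - 1 - p.2 by omega]
    ring

lemma key (a b d : ℕ → ℝ) (μ : ℝ) (k : ℕ)
    (hb : ∀ m, b m = a m + μ * ∑ i ∈ range m, a i * b (m-1-i)) :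
    ∑ j ∈ range (k+1), d (k-j) * b j
      = ∑ j ∈ range (k+1), a (k-j) * (d j + μ * ∑ i ∈ range j, d (j-1-i) * b i) := by
  have h1 : ∑ j ∈ range (k+1), d (k-j) * b j
      = ∑ j ∈ range (k+1), d (k-j) * a j
        + μ * ∑ j ∈ range (k+1), ∑ i ∈ range j, d (k-j) * (a i * b (j-1-i)) := by
    rw [Finset.mul_sum, ← Finset.sum_add_distrib]
    refine Finset.sum_congr rfl fun j _ => ?_
    rw [hb j, Finset.mul_sum, Finset.mul_sum]; ring_nf
    rw [Finset.mul_sum]; ring_nf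
  have h2 : ∑ j ∈ range (k+1), a (k-j) * (d j + μ * ∑ i ∈ range j, d (j-1-i) * b i)
      = ∑ j ∈ range (k+1), a (k-j) * d j
        + μ * ∑ j ∈ range (k+1), ∑ i ∈ range j, a (k-j) * (d i * b (j-1-i)) := by
    rw [Finset.mul_sum, ← Finset.sum_add_distrib]
    refine Finset.sum_congr rfl fun j _ => ?_
    have : ∑ i ∈ range j, d (j-1-i) * b i = ∑ i ∈ range j, d i * b (j-1-i) := by
      rw [← Finset.sum_range_reflect]
      refine Finset.sum_congr rfl fun i hi => ?_
      simp only [mem_range] at hi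
      rw [show j - 1 - (j - 1 - i) = i by omega]
    rw [this, Finset.mul_sum, Finset.mul_sum]; ring_nf
    rw [Finset.mul_sum]; ring_nf
  have h3 : ∑ j ∈ range (k+1), d (k-j) * a j = ∑ j ∈ range (k+1), a (k-j) * d j := by
    rw [← Finset.sum_range_reflect]
    refine Finset.sum_congr rfl fun j hj => ?_
    simp only [mem_range] at hj
    rw [show k + 1 - 1 - j = k - j by omega, show k - (k - j) = j by omega]; ring
  rw [h1, h2, h3, tri_conv]

set_option linter.unusedVariables false in
theorem C_recursion
    (ε : ℝ) (hε : ε ≠ 0) (Φ Ψ : ℤ → ℝ)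
    (c : ℕ → ℤ → ℝ)
    (hc0 : ∀ l : ℤ, c 0 l = Φ l)
    (hc : ∀ k : ℕ, ∀ l : ℤ, c (k + 1) l =
      (c k l - c k (l - 1)) / ε +
      Ψ (l - 2) * ∑ i ∈ Finset.range k,
        (c i l - ε * c (i + 1) l) * c (k - 1 - i) (l - 1))
    (C : ℕ → ℤ → ℝ)
    (hC : ∀ k : ℕ, ∀ l : ℤ, C k l =
      c k l + ε * Ψ (l - 2) * ∑ j ∈ Finset.range k, c (k - 1 - j) l * c j (l - 1)) :
    ∀ l : ℤ,
      C 0 (l + 1) = c 0 (l + 1) ∧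
      ∀ k : ℕ, C (k + 1) (l + 1) =
        c (k + 1) (l + 1) + ε * Ψ (l - 1) *
          ∑ j ∈ Finset.range (k + 1),
            (c (k - j) (l + 1) - ε * c (k + 1 - j) (l + 1)) * C j (l + 1) := by
  intro l
  have e1 : l + 1 - 1 = l := by ring
  have e2 : l + 1 - 2 = l - 1 := by ring
  constructor
  · rw [hC]; simp
  · intro k
    -- the rearranged recursion
    have hb : ∀ m : ℕ, c m l = (c m (l+1) - ε * c (m+1) (l+1))
        + (ε * Ψ (l-1)) * ∑ i ∈ range m,
            (c i (l+1) - ε * c (i+1) (l+1)) * c (m-1-i) l := by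
      intro m
      have h := hc m (l+1)
      rw [e1, e2] at h
      field_simp at h
      linarith [h]
    have hkey := key (fun m => c m (l+1) - ε * c (m+1) (l+1)) (fun m => c m l)
      (fun m => c m (l+1)) (ε * Ψ (l-1)) k hb
    rw [hC (k+1) (l+1), e1, e2]
    congr 1
    congr 1
    rw [show ∑ j ∈ range (k+1), c (k + 1 - 1 - j) (l+1) * c j l
        = ∑ j ∈ range (k+1), c (k - j) (l+1) * c j l from
      Finset.sum_congr rfl fun j hj => by rw [show k + 1 - 1 - j = k - j by omega]]
    rw [hkey]
    refine Finset.sum_congr rfl fun j hj => ?_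
    simp only [mem_range] at hj
    rw [hC j (l+1), e1, e2, show k - j + 1 = k + 1 - j by omega]
end

section
/- Polynomiality of Umemura polynomials via the Toda recursion: Let R = ℚ[q, p, t, parameters] be a polynomial ring equipped with a derivation δ, and let u, v ∈ R with δv, δu ∈ R. Define T : ℕ → Frac(R) by T_0 = T_1 = 1 and T_{n+1}·T_{n−1} = (δ²T_n)·T_n − (δT_n)² + (n·δv + u)·T_n². Then T_n ∈ R for all n ≥ 0; moreover T_n equals the Hankel determinant det(g_{i+j})_{0≤i,j≤n−1} where g_0 = 1 and g_n = δg_{n−1} + v·g_{n−1} + u·Σ_{i+j=n−2} g_i g_j. -/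
open Finset Matrix

section Generic
variable {R : Type*} [CommRing R]

lemma deriv_prod {ι : Type*} [DecidableEq ι] (δ : Derivation ℤ R R) (s : Finset ι) (f : ι → R) :
    δ (∏ i ∈ s, f i) = ∑ i ∈ s, (∏ j ∈ s.erase i, f j) * δ (f i) := by
  induction s using Finset.induction_on with
  | empty => simp
  | @insert a s ha ih =>
    rw [Finset.prod_insert ha, Derivation.leibniz, Finset.sum_insert ha,
      Finset.erase_insert ha, ih, smul_eq_mul, smul_eq_mul, Finset.mul_sum]
    rw [add_comm]
    congr 1
    refine Finset.sum_congr rfl fun i hi => ?_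
    have hia : i ≠ a := fun h => ha (h ▸ hi)
    rw [Finset.erase_insert_of_ne hia.symm,
      Finset.prod_insert (fun h => ha (Finset.mem_of_mem_erase h))]
    ring

lemma deriv_det {N : ℕ} (δ : Derivation ℤ R R) (A : Matrix (Fin N) (Fin N) R) :
    δ A.det = ∑ j, (A.updateCol j fun i => δ (A i j)).det := by
  rw [Matrix.det_apply, map_sum]
  have key : ∀ σ : Equiv.Perm (Fin N),
      δ (Equiv.Perm.sign σ • ∏ i, A (σ i) i)
        = ∑ j, Equiv.Perm.sign σ •
            ((∏ i ∈ Finset.univ.erase j, A (σ i) i) * δ (A (σ j) j)) := by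
    intro σ
    rw [Units.smul_def, map_zsmul, deriv_prod δ Finset.univ (fun i => A (σ i) i),
      ← Finset.smul_sum]
    simp [Units.smul_def]
  rw [Finset.sum_congr rfl fun σ _ => key σ, Finset.sum_comm]
  apply Finset.sum_congr rfl
  intro j _
  rw [Matrix.det_apply]
  apply Finset.sum_congr rfl
  intro σ _
  congr 1
  rw [← Finset.mul_prod_erase Finset.univ _ (Finset.mem_univ j)]
  rw [Matrix.updateCol_apply, if_pos rfl, mul_comm]
  congr 1
  apply Finset.prod_congr rfl
  intro i hi
  rw [Matrix.updateCol_apply, if_neg (Finset.ne_of_mem_erase hi)]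

lemma sum_det_updateColumn {N : ℕ} (A B : Matrix (Fin N) (Fin N) R) :
    ∑ j, (A.updateCol j fun i => B i j).det = Matrix.trace (A.adjugate * B) := by
  rw [Matrix.trace]
  apply Finset.sum_congr rfl
  intro j _
  rw [← Matrix.cramer_apply, Matrix.cramer_eq_adjugate_mulVec]
  rfl

lemma sum_det_updateColumn_mul {N : ℕ} (A M : Matrix (Fin N) (Fin N) R) :
    ∑ j, (A.updateCol j fun i => (M * A) i j).det = A.det * Matrix.trace M := by
  rw [sum_det_updateColumn, ← Matrix.mul_assoc, Matrix.trace_mul_cycle,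
    Matrix.mul_adjugate, Matrix.smul_mul, Matrix.one_mul, Matrix.trace_smul]
  rfl

lemma det_updateColumn_sub {N : ℕ} (A : Matrix (Fin N) (Fin N) R) (j : Fin N) (b c : Fin N → R) :
    (A.updateCol j (b - c)).det = (A.updateCol j b).det - (A.updateCol j c).det := by
  rw [sub_eq_add_neg, Matrix.det_updateCol_add, show -c = (-1 : R) • c by simp,
    Matrix.det_updateCol_smul]
  ring

/-- `Hk g N o` is the matrix `g (i + o j)`. -/
def Hk {R : Type*} (g : ℕ → R) (N : ℕ) (o : ℕ → ℕ) : Matrix (Fin N) (Fin N) R :=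
  Matrix.of fun i j => g (i.val + o j.val)

variable (δ : Derivation ℤ R R) (u v : R) (g : ℕ → R)

lemma S_split (i m : ℕ) :
    ∑ b ∈ range (i + m), g b * g (i + m - 1 - b)
      = (∑ a ∈ range i, g (i - 1 - a) * g (a + m))
        + ∑ b ∈ range m, g (m - 1 - b) * g (b + i) := by
  rw [Finset.sum_range_add]
  congr 1
  · rw [← Finset.sum_range_reflect]
    refine Finset.sum_congr rfl fun a ha => ?_
    rw [Finset.mem_range] at ha
    congr 2 <;> omega
  · refine Finset.sum_congr rfl fun b hb => ?_
    rw [Finset.mem_range] at hb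
    rw [mul_comm]
    congr 2 <;> omega


end Generic

section Master
variable {R : Type*} [CommRing R]
variable (δ : Derivation ℤ R R) (u v : R) (g : ℕ → R)

lemma deriv_det_hmat
    (hg : ∀ n : ℕ, g (n + 1) =
      δ (g n) + v * g n + u * ∑ i ∈ Finset.range n, g i * g (n - 1 - i))
    {N : ℕ} (o : ℕ → ℕ) :
    δ (Hk g N o).det
      = (∑ j, ((Hk g N o).updateCol j fun i => g (i.val + o j.val + 1)).det)
        - (N : R) * v * (Hk g N o).det
        - u * ∑ j, ((Hk g N o).updateCol j fun i =>
            ∑ b ∈ Finset.range (o j.val), g (o j.val - 1 - b) * g (b + i.val)).det := by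
  classical
  set A := Hk g N o with hA
  have dg : ∀ q : ℕ, δ (g q) = g (q + 1) - v * g q - u * ∑ b ∈ range q, g b * g (q - 1 - b) := by
    intro q; have := hg q; linear_combination -this
  -- the strictly lower triangular convolution matrix
  set M : Matrix (Fin N) (Fin N) R :=
    Matrix.of (fun i k : Fin N => if k.val < i.val then g (i.val - 1 - k.val) else 0) with hM
  have htr : Matrix.trace M = 0 := by
    simp [Matrix.trace, Matrix.diag, hM]
  have colsplit : ∀ j : Fin N, (fun i => δ (A i j))
      = (fun i : Fin N => g (i.val + o j.val + 1))
        - v • (fun i => A i j)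
        - ((u • fun i => (M * A) i j) + u • fun i =>
            ∑ b ∈ Finset.range (o j.val), g (o j.val - 1 - b) * g (b + i.val)) := by
    intro j
    funext i
    have hAij : A i j = g (i.val + o j.val) := rfl
    have hMA : (M * A) i j = ∑ a ∈ range i.val, g (i.val - 1 - a) * g (a + o j.val) := by
      have hfin : ∑ k : Fin N, M i k * A k j
          = ∑ k ∈ range N, (if k < (i : ℕ) then g ((i : ℕ) - 1 - k) else 0)
              * g (k + o j.val) := by
        have hrange : ∀ k : Fin N, M i k * A k j
            = (if (k : ℕ) < (i : ℕ) then g ((i : ℕ) - 1 - (k : ℕ)) else 0)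
              * g ((k : ℕ) + o j.val) := by
          intro k
          by_cases hk : (k : ℕ) < (i : ℕ)
          · simp only [hM, hA, Hk, Matrix.of_apply, if_pos hk]
          · simp [hM, hA, Hk, if_neg hk]
        rw [Finset.sum_congr rfl fun k _ => hrange k]
        exact Fin.sum_univ_eq_sum_range
          (fun k => (if k < (i : ℕ) then g ((i : ℕ) - 1 - k) else 0) * g (k + o j.val)) N
      rw [Matrix.mul_apply, hfin,
        ← Finset.sum_subset (Finset.range_subset_range.mpr (le_of_lt i.isLt))
          (fun x _ hx => by rw [if_neg (by simpa using hx), zero_mul])]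
      exact Finset.sum_congr rfl fun k hk => by rw [if_pos (Finset.mem_range.1 hk)]
    simp only [Pi.sub_apply, Pi.add_apply, Pi.smul_apply, smul_eq_mul]
    rw [hAij, dg (i.val + o j.val), hMA, S_split g i.val (o j.val)]
    ring
  rw [deriv_det δ A]
  have term : ∀ j, ((A.updateCol j) fun i => δ (A i j)).det
      = ((A.updateCol j) fun i => g (i.val + o j.val + 1)).det
        - v * A.det
        - (u * ((A.updateCol j) fun i => (M * A) i j).det
           + u * ((A.updateCol j) fun i =>
              ∑ b ∈ Finset.range (o j.val), g (o j.val - 1 - b) * g (b + i.val)).det) := by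
    intro j
    rw [colsplit j, det_updateColumn_sub, det_updateColumn_sub, Matrix.det_updateCol_add,
      Matrix.det_updateCol_smul, Matrix.det_updateCol_smul,
      Matrix.det_updateCol_smul, Matrix.updateCol_eq_self]
  rw [Finset.sum_congr rfl (fun j _ => term j), Finset.sum_sub_distrib,
    Finset.sum_sub_distrib, Finset.sum_add_distrib, ← Finset.mul_sum, ← Finset.mul_sum,
    sum_det_updateColumn_mul A M, htr, Finset.sum_const, Finset.card_univ, Fintype.card_fin,
    nsmul_eq_mul, ← Finset.mul_sum]
  ring

end Master


section Instances
variable {R : Type*} [CommRing R]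
variable (δ : Derivation ℤ R R) (u v : R) (g : ℕ → R)

/-- offsets for `τ̂`. -/
def oh (N : ℕ) : ℕ → ℕ := fun x => if x = N - 1 then N else x
/-- offsets for `ρ`. -/
def orh (N : ℕ) : ℕ → ℕ := fun x => if x = N - 1 then N else if x = N - 2 then N - 1 else x
/-- offsets for `τ̂̂`. -/
def ohh (N : ℕ) : ℕ → ℕ := fun x => if x = N - 1 then N + 1 else x

lemma det_upd_shift_zero {N : ℕ} (o : ℕ → ℕ) (j j' : Fin N) (hne : j' ≠ j)
    (heq : o j'.val = o j.val + 1) :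
    ((Hk g N o).updateCol j fun i => g (i.val + o j.val + 1)).det = 0 := by
  have hcol : (fun i : Fin N => g (i.val + o j.val + 1)) = fun k => (Hk g N o) k j' := by
    funext k
    simp only [Hk, Matrix.of_apply, heq]
    congr 1 <;> omega
  rw [hcol]
  exact Matrix.det_updateCol_eq_zero hne

lemma det_upd_conv_zero {N : ℕ} (o : ℕ → ℕ) (j : Fin N) (hj : o j.val = j.val)
    (hlow : ∀ k : Fin N, k.val < j.val → o k.val = k.val) :
    ((Hk g N o).updateCol j fun i =>
      ∑ b ∈ Finset.range (o j.val), g (o j.val - 1 - b) * g (b + i.val)).det = 0 := by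
  classical
  set A := Hk g N o with hAdef
  have hterm : ∀ i k : Fin N, (if k.val < j.val then g (j.val - 1 - k.val) else 0) • A i k
      = (fun b : ℕ => if b < j.val then g (j.val - 1 - b) * g (b + i.val) else 0) k.val := by
    intro i k
    simp only [smul_eq_mul]
    by_cases hk : k.val < j.val
    · rw [if_pos hk, if_pos hk]
      have hA : A i k = g (k.val + i.val) := by
        show g (i.val + o k.val) = g (k.val + i.val)
        rw [hlow k hk, Nat.add_comm]
      rw [hA]
    · rw [if_neg hk, if_neg hk, zero_mul]
  have hcol : (fun i : Fin N => ∑ b ∈ Finset.range (o j.val),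
        g (o j.val - 1 - b) * g (b + i.val))
      = fun i => ∑ k : Fin N, (if k.val < j.val then g (j.val - 1 - k.val) else 0) • A i k := by
    funext i
    rw [Finset.sum_congr rfl fun k _ => hterm i k,
      Fin.sum_univ_eq_sum_range
        (fun b => if b < (j : ℕ) then g ((j : ℕ) - 1 - b) * g (b + (i : ℕ)) else 0) N, hj]
    rw [← Finset.sum_subset (Finset.range_subset_range.mpr (le_of_lt j.isLt))
      (fun x _ hx => if_neg (by simpa using hx))]
    exact (Finset.sum_congr rfl fun b hb => if_pos (Finset.mem_range.1 hb)).symm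
  rw [hcol, Matrix.det_updateCol_sum]
  simp

lemma lemA
    (hg : ∀ n : ℕ, g (n + 1) =
      δ (g n) + v * g n + u * ∑ i ∈ Finset.range n, g i * g (n - 1 - i)) (m : ℕ) :
    δ (Hk g (m+2) id).det
      = (Hk g (m+2) (oh (m+2))).det - ((m+2 : ℕ) : R) * v * (Hk g (m+2) id).det := by
  rw [deriv_det_hmat δ u v g hg id]
  have h1 : ∑ j : Fin (m+2), ((Hk g (m+2) id).updateCol j fun i => g (i.val + id j.val + 1)).det
      = (Hk g (m+2) (oh (m+2))).det := by
    rw [Fin.sum_univ_castSucc]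
    have hz : ∀ j : Fin (m+1), ((Hk g (m+2) id).updateCol j.castSucc
        fun i => g (i.val + id j.castSucc.val + 1)).det = 0 := by
      intro j
      exact det_upd_shift_zero g id j.castSucc j.succ
        (by simp [Fin.ext_iff]) (by simp [id])
    rw [Finset.sum_congr rfl fun j _ => hz j, Finset.sum_const_zero, zero_add]
    have hupd : (Hk g (m+2) id).updateCol (Fin.last (m+1))
        (fun i => g (i.val + id (Fin.last (m+1)).val + 1)) = Hk g (m+2) (oh (m+2)) := by
      ext i j
      rw [Matrix.updateCol_apply]
      by_cases hj : j = Fin.last (m+1)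
      · rw [if_pos hj]
        subst hj
        show g (i.val + (m+1) + 1) = g (i.val + oh (m+2) (m+1))
        have ho : oh (m+2) (m+1) = m+2 := by simp [oh]
        rw [ho]
        congr 1 <;> omega
      · rw [if_neg hj]
        show g (i.val + j.val) = g (i.val + oh (m+2) j.val)
        have hjv : j.val ≠ m + 1 := fun h => hj (Fin.ext (by simpa using h))
        have ho : oh (m+2) j.val = j.val := by simp [oh, hjv]
        rw [ho]
    rw [hupd]
  have h2 : ∑ j : Fin (m+2), ((Hk g (m+2) id).updateCol j fun i =>
      ∑ b ∈ Finset.range (id j.val), g (id j.val - 1 - b) * g (b + i.val)).det = 0 := by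
    rw [Finset.sum_congr rfl fun j _ =>
      det_upd_conv_zero g id j rfl (fun k _ => rfl), Finset.sum_const_zero]
  rw [h1, h2]
  ring

lemma lemB
    (hg0 : g 0 = 1)
    (hg : ∀ n : ℕ, g (n + 1) =
      δ (g n) + v * g n + u * ∑ i ∈ Finset.range n, g i * g (n - 1 - i)) (m : ℕ) :
    δ (Hk g (m+2) (oh (m+2))).det
      = (Hk g (m+2) (orh (m+2))).det + (Hk g (m+2) (ohh (m+2))).det
        - ((m+2 : ℕ) : R) * v * (Hk g (m+2) (oh (m+2))).det
        - u * (Hk g (m+2) id).det := by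
  classical
  set o : ℕ → ℕ := oh (m+2) with hodef
  have hoval : ∀ x : ℕ, x ≤ m → o x = x := by
    intro x hx; simp only [hodef, oh]; rw [if_neg (by omega)]
  have holast : o (m+1) = m+2 := by simp only [hodef, oh]; rw [if_pos (by omega)]
  rw [deriv_det_hmat δ u v g hg o]
  set A := Hk g (m+2) o with hAdef
  -- shift sum
  have h1 : ∑ j : Fin (m+2), (A.updateCol j fun i => g (i.val + o j.val + 1)).det
      = (Hk g (m+2) (orh (m+2))).det + (Hk g (m+2) (ohh (m+2))).det := by
    rw [Fin.sum_univ_castSucc, Fin.sum_univ_castSucc]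
    have hz : ∀ j : Fin m, (A.updateCol j.castSucc.castSucc
        fun i => g (i.val + o j.castSucc.castSucc.val + 1)).det = 0 := by
      intro j
      refine det_upd_shift_zero g o j.castSucc.castSucc j.succ.castSucc
        (by simp only [Ne, Fin.ext_iff, Fin.coe_castSucc, Fin.val_succ]; omega) ?_
      have h1 : o j.succ.castSucc.val = j.val + 1 := by
        rw [show (j.succ.castSucc : Fin (m+2)).val = j.val + 1 by simp]
        exact hoval _ (by omega)
      have h2 : o j.castSucc.castSucc.val = j.val := by
        rw [show (j.castSucc.castSucc : Fin (m+2)).val = j.val by simp]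
        exact hoval _ (by omega)
      rw [h1, h2]
    rw [Finset.sum_congr rfl fun j _ => hz j, Finset.sum_const_zero, zero_add]
    have hv1 : ((Fin.last m).castSucc : Fin (m+2)).val = m := by simp
    have hrho : (A.updateCol (Fin.last m).castSucc
        fun i => g (i.val + o ((Fin.last m).castSucc : Fin (m+2)).val + 1)).det
        = (Hk g (m+2) (orh (m+2))).det := by
      congr 1
      ext i j
      rw [Matrix.updateCol_apply]
      by_cases hj : j = (Fin.last m).castSucc
      · rw [if_pos hj]
        subst hj
        show g (i.val + o m + 1) = g (i.val + orh (m+2) m)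
        rw [hoval m le_rfl,
          show orh (m+2) m = m + 1 by
            simp only [orh]; rw [if_neg (by omega), if_pos (by omega)]; omega]
        congr 1 <;> omega
      · rw [if_neg hj]
        show g (i.val + o j.val) = g (i.val + orh (m+2) j.val)
        have hjm : j.val ≠ m := fun h => hj (Fin.ext (by simpa using h))
        have : orh (m+2) j.val = o j.val := by
          simp only [orh, hodef, oh]
          by_cases h1 : j.val = m + 1
          · rw [if_pos (by omega), if_pos (by omega)]
          · rw [if_neg (by omega), if_neg (by omega), if_neg (by omega)]
        rw [this]
    have hhh : (A.updateCol (Fin.last (m+1))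
        fun i => g (i.val + o (Fin.last (m+1)).val + 1)).det
        = (Hk g (m+2) (ohh (m+2))).det := by
      congr 1
      ext i j
      rw [Matrix.updateCol_apply]
      by_cases hj : j = Fin.last (m+1)
      · rw [if_pos hj]
        subst hj
        show g (i.val + o (m+1) + 1) = g (i.val + ohh (m+2) (m+1))
        rw [holast, show ohh (m+2) (m+1) = m + 3 by simp only [ohh]; rw [if_pos (by omega)]]
        congr 1 <;> omega
      · rw [if_neg hj]
        show g (i.val + o j.val) = g (i.val + ohh (m+2) j.val)
        have hjm : j.val ≠ m + 1 := fun h => hj (Fin.ext (by simpa using h))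
        have : ohh (m+2) j.val = o j.val := by
          simp only [ohh, hodef, oh]
          rw [if_neg (by omega), if_neg (by omega)]
        rw [this]
    rw [hrho, hhh]
  -- convolution sum
  have h2 : ∑ j : Fin (m+2), (A.updateCol j fun i =>
      ∑ b ∈ Finset.range (o j.val), g (o j.val - 1 - b) * g (b + i.val)).det
      = (Hk g (m+2) id).det := by
    rw [Fin.sum_univ_castSucc]
    have hz : ∀ j : Fin (m+1), (A.updateCol j.castSucc fun i =>
        ∑ b ∈ Finset.range (o j.castSucc.val), g (o j.castSucc.val - 1 - b) * g (b + i.val)).det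
        = 0 := by
      intro j
      refine det_upd_conv_zero g o j.castSucc ?_ ?_
      · exact hoval _ (Nat.lt_succ_iff.mp j.isLt)
      · intro k hk
        refine hoval _ ?_
        have := j.isLt
        simp only [Fin.coe_castSucc] at hk
        omega
    rw [Finset.sum_congr rfl fun j _ => hz j, Finset.sum_const_zero, zero_add]
    -- the last column
    have hcol : (fun i : Fin (m+2) => ∑ b ∈ Finset.range (o (Fin.last (m+1)).val),
          g (o (Fin.last (m+1)).val - 1 - b) * g (b + i.val))
        = (fun i => ∑ k : Fin (m+2),
            (if k.val < m + 1 then g (m + 1 - k.val) else 0) • A i k)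
          + g 0 • (fun i : Fin (m+2) => g (i.val + (m+1))) := by
      funext i
      have hlast : o (Fin.last (m+1)).val = m + 2 := holast
      rw [hlast]
      have hterm : ∀ k : Fin (m+2), (if k.val < m + 1 then g (m + 1 - k.val) else 0) • A i k
          = (fun b : ℕ => if b < m + 1 then g (m + 2 - 1 - b) * g (b + i.val) else 0) k.val := by
        intro k
        simp only [smul_eq_mul]
        by_cases hk : k.val < m + 1
        · rw [if_pos hk, if_pos hk]
          have hA : A i k = g (k.val + i.val) := by
            show g (i.val + o k.val) = g (k.val + i.val)
            rw [hoval _ (by omega), Nat.add_comm]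
          rw [hA, show m + 2 - 1 - k.val = m + 1 - k.val by omega]
        · rw [if_neg hk, if_neg hk, zero_mul]
      rw [Pi.add_apply, Finset.sum_congr rfl fun k _ => hterm k,
        Fin.sum_univ_eq_sum_range
          (fun b => if b < m + 1 then g (m + 2 - 1 - b) * g (b + (i : ℕ)) else 0) (m+2),
        Finset.sum_range_succ
          (fun b => if b < m + 1 then g (m + 2 - 1 - b) * g (b + (i : ℕ)) else 0) (m+1),
        Finset.sum_range_succ (fun b => g (m + 2 - 1 - b) * g (b + (i : ℕ))) (m+1),
        if_neg (by omega : ¬ (m+1 < m+1)),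
        Finset.sum_congr rfl (fun b hb => if_pos (Finset.mem_range.1 hb))]
      simp only [Pi.smul_apply, smul_eq_mul]
      rw [show m + 2 - 1 - (m + 1) = 0 by omega,
        show g (m + 1 + i.val) = g (i.val + (m+1)) by congr 1; omega]
      ring
    rw [hcol, Matrix.det_updateCol_add, Matrix.det_updateCol_sum,
      Matrix.det_updateCol_smul, hg0]
    have hupd : A.updateCol (Fin.last (m+1)) (fun i : Fin (m+2) => g (i.val + (m+1)))
        = Hk g (m+2) id := by
      ext i j
      rw [Matrix.updateCol_apply]
      by_cases hj : j = Fin.last (m+1)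
      · rw [if_pos hj]; subst hj
        show g (i.val + (m+1)) = g (i.val + (m+1))
        rfl
      · rw [if_neg hj]
        show g (i.val + o j.val) = g (i.val + j.val)
        have hjm : j.val ≠ m + 1 := fun h => hj (Fin.ext (by simpa using h))
        rw [hoval _ (by omega)]
    rw [hupd]
    simp
  rw [h1, h2]

end Instances

section LemC
variable {R : Type*} [CommRing R]

lemma det_updateRow_finset_sum {N : ℕ} {ι : Type*} [DecidableEq ι]
    (A : Matrix (Fin N) (Fin N) R) (r : Fin N) (s : Finset ι) (w : ι → Fin N → R) :
    (A.updateRow r (∑ j ∈ s, w j)).det = ∑ j ∈ s, (A.updateRow r (w j)).det := by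
  induction s using Finset.induction_on with
  | empty =>
    simp only [Finset.sum_empty]
    exact Matrix.det_eq_zero_of_row_eq_zero r (by simp)
  | @insert a s ha ih =>
    rw [Finset.sum_insert ha, Finset.sum_insert ha, Matrix.det_updateRow_add, ih]

lemma cramer_single_last (g : ℕ → R) (m : ℕ) :
    Matrix.cramer (Hk g (m+2) id) (Pi.single (Fin.last (m+1)) 1) (Fin.last (m+1))
      = (Hk g (m+1) id).det := by
  rw [Matrix.cramer_apply]
  set M := (Hk g (m+2) id).updateCol (Fin.last (m+1)) (Pi.single (Fin.last (m+1)) 1) with hM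
  rw [Matrix.det_succ_column M (Fin.last (m+1))]
  rw [Finset.sum_eq_single (Fin.last (m+1))]
  · have h1 : M (Fin.last (m+1)) (Fin.last (m+1)) = 1 := by
      rw [hM, Matrix.updateCol_self, Pi.single_eq_same]
    rw [h1, mul_one]
    have h2 : ((-1 : R)) ^ ((Fin.last (m+1)).val + (Fin.last (m+1)).val) = 1 := by
      rw [Fin.val_last]; exact Even.neg_one_pow ⟨m + 1, by ring⟩
    rw [h2, one_mul]
    congr 1
    ext i j
    simp only [Matrix.submatrix_apply, Fin.succAbove_last]
    rw [hM, Matrix.updateCol_ne (Fin.castSucc_lt_last j).ne]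
    rfl
  · intro i _ hine
    have h0 : M i (Fin.last (m+1)) = 0 := by
      rw [hM, Matrix.updateCol_self, Pi.single_eq_of_ne hine]
    rw [h0, mul_zero, zero_mul]
  · intro h
    exact absurd (Finset.mem_univ _) h

lemma det_minor_eq (g : ℕ → R) (m : ℕ) (j : Fin (m+2)) :
    ((Hk g (m+3) id).submatrix Fin.castSucc (Fin.castSucc j).succAbove).det
      = (-1 : R) ^ (m + 1 - j.val)
        * ((Hk g (m+2) id).updateCol j (fun i => g (i.val + (m+2)))).det := by
  set i0 : Fin (m+2) := ⟨m + 1 - j.val, by omega⟩ with hi0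
  set π : Equiv.Perm (Fin (m+2)) := Fin.revPerm * Fin.cycleRange i0 * Fin.revPerm with hpidef
  set B := (Hk g (m+3) id).submatrix Fin.castSucc (Fin.castSucc j).succAbove with hB
  have happ : ∀ t : Fin (m+2), π t = (Fin.cycleRange i0 t.rev).rev := by
    intro t; rfl
  have hpival : ∀ k : Fin (m+2), (π k : ℕ)
      = if k.val < j.val then k.val else if k.val = j.val then m + 1 else k.val - 1 := by
    intro k
    have hjlt := j.isLt
    have hklt := k.isLt
    rcases lt_trichotomy k.val j.val with h|h|h
    · rw [if_pos h, happ k, Fin.cycleRange_of_gt (by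
        rw [Fin.lt_def, Fin.val_rev]
        show m + 1 - j.val < m + 2 - (k.val + 1)
        omega), Fin.rev_rev]
    · rw [if_neg (by omega), if_pos h]
      have hrev : k.rev = i0 := by
        apply Fin.ext
        rw [Fin.val_rev]
        show m + 2 - (k.val + 1) = m + 1 - j.val
        omega
      rw [happ k, hrev, Fin.cycleRange_self, Fin.val_rev]
      show m + 2 - (0 + 1) = m + 1
      omega
    · rw [if_neg (by omega), if_neg (by omega), happ k]
      have hlt : k.rev < i0 := by
        rw [Fin.lt_def, Fin.val_rev]
        show m + 2 - (k.val + 1) < m + 1 - j.val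
        omega
      rw [Fin.val_rev, Fin.coe_cycleRange_of_lt hlt, Fin.val_rev]
      omega
  have hsucc : ∀ t : Fin (m+2), (((Fin.castSucc j).succAbove t) : ℕ)
      = if t.val < j.val then t.val else t.val + 1 := by
    intro t
    by_cases h : Fin.castSucc t < Fin.castSucc j
    · rw [Fin.succAbove_of_castSucc_lt _ _ h, if_pos (by
        rwa [Fin.castSucc_lt_castSucc_iff, Fin.lt_def] at h)]
      rfl
    · rw [Fin.succAbove_of_le_castSucc _ _ (le_of_not_gt h), if_neg (by
        rw [Fin.castSucc_lt_castSucc_iff, Fin.lt_def] at h; omega)]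
      rfl
  have hperm : (Hk g (m+2) id).updateCol j (fun i => g (i.val + (m+2)))
      = B.submatrix id π := by
    ext r k
    simp only [Matrix.submatrix_apply, id_eq]
    have hBrk : B r (π k) = g (r.val + (((Fin.castSucc j).succAbove (π k)) : ℕ)) := rfl
    rw [hBrk, hsucc (π k), Matrix.updateCol_apply]
    have hjlt := j.isLt
    have hklt := k.isLt
    by_cases hk : k = j
    · rw [if_pos hk]
      have hv : (π k : ℕ) = m + 1 := by
        rw [hpival k, if_neg (by omega : ¬ (k.val < j.val)), if_pos (by rw [hk])]
      rw [hv, if_neg (by omega)]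
    · rw [if_neg hk]
      have hkj : k.val ≠ j.val := fun h => hk (Fin.ext h)
      by_cases h2 : k.val < j.val
      · have hv : (π k : ℕ) = k.val := by rw [hpival k, if_pos h2]
        rw [hv, if_pos h2]
        rfl
      · have hv : (π k : ℕ) = k.val - 1 := by rw [hpival k, if_neg h2, if_neg hkj]
        rw [hv, if_neg (by omega)]
        show g (r.val + k.val) = g (r.val + (k.val - 1 + 1))
        congr 1
        omega
  have hsign : Equiv.Perm.sign π = (-1 : ℤˣ) ^ (m + 1 - j.val) := by
    rw [hpidef, Equiv.Perm.sign_mul, Equiv.Perm.sign_mul, Fin.sign_cycleRange]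
    have : ∀ u x : ℤˣ, u * x * u = x := by
      intro u x
      rw [mul_comm u x, mul_assoc, ← sq, Int.units_sq, mul_one]
    rw [this]
  have key : ((Hk g (m+2) id).updateCol j (fun i => g (i.val + (m+2)))).det
      = (-1 : R) ^ (m + 1 - j.val) * B.det := by
    rw [hperm, Matrix.det_permute' π B, hsign]
    push_cast
    ring
  rw [key, ← mul_assoc, ← pow_add,
    Even.neg_one_pow ⟨m + 1 - j.val, by ring⟩, one_mul]

lemma bordered (g : ℕ → R) (m : ℕ) :
    (Hk g (m+3) id).det
      = g (2*m+4) * (Hk g (m+2) id).det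
        - ∑ j : Fin (m+2), g (j.val + (m+2)) *
            ((Hk g (m+2) id).updateCol j (fun i => g (i.val + (m+2)))).det := by
  set M := Hk g (m+3) id with hM
  have hrow : M = M.updateRow (Fin.last (m+2))
      (∑ j : Fin (m+3), Pi.single j (g ((m+2) + j.val))) := by
    have h1 : (∑ j : Fin (m+3), Pi.single j (g ((m+2) + j.val)))
        = fun j : Fin (m+3) => g ((m+2) + j.val) :=
      Finset.univ_sum_single _
    have h2 : (fun j : Fin (m+3) => g ((m+2) + j.val)) = M (Fin.last (m+2)) := rfl
    rw [h1, h2, Matrix.updateRow_eq_self]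
  have cof : ∀ (j : Fin (m+3)) (x : R),
      (M.updateRow (Fin.last (m+2)) (Pi.single j x)).det
        = (-1 : R) ^ ((m+2) + j.val) * x * (M.submatrix Fin.castSucc j.succAbove).det := by
    intro j x
    rw [Matrix.det_succ_row _ (Fin.last (m+2))]
    rw [Finset.sum_eq_single j (fun b _ hb => by
        rw [Matrix.updateRow_self, Pi.single_eq_of_ne hb, mul_zero, zero_mul])
      (fun h => absurd (Finset.mem_univ _) h)]
    have he : (M.updateRow (Fin.last (m+2)) (Pi.single j x)) (Fin.last (m+2)) j = x := by
      rw [Matrix.updateRow_self, Pi.single_eq_same]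
    rw [he]
    have hsub : (M.updateRow (Fin.last (m+2)) (Pi.single j x)).submatrix
        (Fin.last (m+2)).succAbove j.succAbove = M.submatrix Fin.castSucc j.succAbove := by
      ext r c
      simp only [Matrix.submatrix_apply, Fin.succAbove_last]
      rw [Matrix.updateRow_ne (Fin.castSucc_lt_last r).ne]
    rw [hsub, Fin.val_last]
  conv_lhs => rw [hrow]
  rw [det_updateRow_finset_sum, Fin.sum_univ_castSucc,
    Finset.sum_congr rfl (fun j _ => cof j.castSucc _), cof (Fin.last (m+2)) _]
  have hminor_last : (M.submatrix Fin.castSucc (Fin.last (m+2)).succAbove).det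
      = (Hk g (m+2) id).det := by
    congr 1
    ext r c
    simp only [Matrix.submatrix_apply, Fin.succAbove_last]
    rfl
  have hlast : (-1 : R) ^ ((m+2) + ((Fin.last (m+2)) : ℕ)) * g ((m+2) + ((Fin.last (m+2)) : ℕ))
        * (M.submatrix Fin.castSucc (Fin.last (m+2)).succAbove).det
      = g (2*m+4) * (Hk g (m+2) id).det := by
    rw [hminor_last, Fin.val_last,
      Even.neg_one_pow (⟨m+2, by ring⟩ : Even ((m+2) + (m+2))), one_mul,
      show (m+2) + (m+2) = 2*m+4 by omega]
  have hterm : ∀ j : Fin (m+2),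
      (-1 : R) ^ ((m+2) + (j.castSucc : ℕ)) * g ((m+2) + (j.castSucc : ℕ))
          * (M.submatrix Fin.castSucc (j.castSucc).succAbove).det
        = -(g (j.val + (m+2)) *
            ((Hk g (m+2) id).updateCol j (fun i => g (i.val + (m+2)))).det) := by
    intro j
    rw [det_minor_eq g m j]
    have hcs : ((j.castSucc : Fin (m+3)) : ℕ) = j.val := rfl
    rw [hcs]
    have hsgn : (-1 : R) ^ ((m+2) + j.val) * (-1 : R) ^ (m + 1 - j.val) = -1 := by
      rw [← pow_add, show (m+2) + j.val + (m + 1 - j.val) = 2*m+3 by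
          have := j.isLt; omega,
        Odd.neg_one_pow ⟨m+1, by ring⟩]
    have hgg : g ((m+2) + j.val) = g (j.val + (m+2)) := by rw [Nat.add_comm]
    rw [hgg]
    linear_combination (g (j.val + (m+2)) *
      ((Hk g (m+2) id).updateCol j (fun i => g (i.val + (m+2)))).det) * hsgn
  rw [Finset.sum_congr rfl (fun j _ => hterm j), hlast, Finset.sum_neg_distrib]
  ring

lemma lemC (g : ℕ → R) (m : ℕ) :
    (Hk g (m+3) id).det * (Hk g (m+1) id).det
      = (Hk g (m+2) id).det * (Hk g (m+2) (ohh (m+2))).det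
        + (Hk g (m+2) id).det * (Hk g (m+2) (orh (m+2))).det
        - (Hk g (m+2) (oh (m+2))).det ^ 2 := by
  classical
  set G := Hk g (m+2) id with hG
  set τ : R := G.det with htau
  set h : Fin (m+2) → R := fun i => g (i.val + (m+2)) with hh
  set k : Fin (m+2) → R := fun i => g (i.val + (m+3)) with hkdef
  set X : Fin (m+2) → R := fun j => (G.updateCol j h).det with hXdef
  set last2 : Fin (m+2) := Fin.last (m+1) with hlast2
  have hlast2v : (last2 : ℕ) = m + 1 := rfl
  set pre : Fin (m+2) := ⟨m, by omega⟩ with hpre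
  set c : R := (∑ j, h j * X j) - τ * g (2*m+4) with hc
  -- identifications of determinants
  have idh : G.updateCol last2 h = Hk g (m+2) (oh (m+2)) := by
    ext i j
    rw [Matrix.updateCol_apply]
    by_cases hj : j = last2
    · rw [if_pos hj]; subst hj
      show g (i.val + (m+2)) = g (i.val + oh (m+2) (m+1))
      rw [show oh (m+2) (m+1) = m+2 by simp only [oh]; rw [if_pos (by omega)]]
    · rw [if_neg hj]
      show g (i.val + j.val) = g (i.val + oh (m+2) j.val)
      have hv : j.val ≠ m+1 := fun hval => hj (Fin.ext (by rw [hlast2v]; exact hval))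
      rw [show oh (m+2) j.val = j.val by simp only [oh]; rw [if_neg (by omega)]]
  have idk : G.updateCol last2 k = Hk g (m+2) (ohh (m+2)) := by
    ext i j
    rw [Matrix.updateCol_apply]
    by_cases hj : j = last2
    · rw [if_pos hj]; subst hj
      show g (i.val + (m+3)) = g (i.val + ohh (m+2) (m+1))
      rw [show ohh (m+2) (m+1) = m+3 by simp only [ohh]; rw [if_pos (by omega)]]
    · rw [if_neg hj]
      show g (i.val + j.val) = g (i.val + ohh (m+2) j.val)
      have hv : j.val ≠ m+1 := fun hval => hj (Fin.ext (by rw [hlast2v]; exact hval))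
      rw [show ohh (m+2) j.val = j.val by simp only [ohh]; rw [if_neg (by omega)]]
  have idrho : X pre = - (Hk g (m+2) (orh (m+2))).det := by
    have hne : pre ≠ last2 := by
      intro hcon
      have : (pre : ℕ) = (last2 : ℕ) := by rw [hcon]
      rw [hlast2v] at this
      simp [hpre] at this
    have hswap : G.updateCol pre h
        = (Hk g (m+2) (orh (m+2))).submatrix id (Equiv.swap pre last2) := by
      ext i j
      simp only [Matrix.submatrix_apply, id_eq]
      rw [Matrix.updateCol_apply]
      by_cases hj : j = pre
      · rw [if_pos hj]; subst hj
        rw [Equiv.swap_apply_left]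
        show g (i.val + (m+2)) = g (i.val + orh (m+2) (m+1))
        rw [show orh (m+2) (m+1) = m+2 by simp only [orh]; rw [if_pos (by omega)]]
      · rw [if_neg hj]
        by_cases hj2 : j = last2
        · subst hj2
          rw [Equiv.swap_apply_right]
          show g (i.val + (m+1)) = g (i.val + orh (m+2) m)
          rw [show orh (m+2) m = m+1 by
            simp only [orh]; rw [if_neg (by omega), if_pos (by omega)]; omega]
        · rw [Equiv.swap_apply_of_ne_of_ne hj hj2]
          show g (i.val + j.val) = g (i.val + orh (m+2) j.val)
          have h1 : j.val ≠ m := fun hv => hj (Fin.ext (by simpa [hpre] using hv))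
          have h2 : j.val ≠ m+1 := fun hv => hj2 (Fin.ext (by rw [hlast2v]; exact hv))
          rw [show orh (m+2) j.val = j.val by
            simp only [orh]; rw [if_neg (by omega), if_neg (by omega)]]
    show (G.updateCol pre h).det = _
    rw [hswap, Matrix.det_permute', Equiv.Perm.sign_swap hne]
    push_cast
    ring
  have idXl : X last2 = (Hk g (m+2) (oh (m+2))).det := by
    show (G.updateCol last2 h).det = _
    rw [idh]
  -- adjugate facts
  have fact2 : ∀ (b : Fin (m+2) → R) (jj : Fin (m+2)),
      ∑ t, G.adjugate jj t * b t = (G.updateCol jj b).det := by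
    intro b jj
    have happ := congrFun (Matrix.cramer_eq_adjugate_mulVec G b) jj
    rw [Matrix.cramer_apply] at happ
    rw [happ]
    rfl
  have hGX : ∀ i, ∑ t, G i t * X t = τ * h i := by
    have hcr : Matrix.cramer G h = X := funext fun t => Matrix.cramer_apply G h t
    have h1 : G *ᵥ X = τ • h := by
      rw [← hcr, Matrix.cramer_eq_adjugate_mulVec, Matrix.mulVec_mulVec, Matrix.mul_adjugate,
        Matrix.smul_mulVec, Matrix.one_mulVec]
    intro i
    have h2 := congrFun h1 i
    simpa [Matrix.mulVec, dotProduct] using h2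
  have hAGw : ∀ w : Fin (m+2) → R,
      ∑ i, G.adjugate last2 i * (∑ t, G i t * w t) = τ * w last2 := by
    intro w
    have h1 : G.adjugate *ᵥ (G *ᵥ w) = τ • w := by
      rw [Matrix.mulVec_mulVec, Matrix.adjugate_mul, Matrix.smul_mulVec,
        Matrix.one_mulVec]
    have h2 := congrFun h1 last2
    simpa [Matrix.mulVec, dotProduct] using h2
  have hadjll : G.adjugate last2 last2 = (Hk g (m+1) id).det := by
    have h1 := fact2 (Pi.single last2 1 : Fin (m+2) → R) last2
    have hz : ∀ b : Fin (m+2), b ≠ last2 →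
        G.adjugate last2 b * (Pi.single last2 1 : Fin (m+2) → R) b = 0 :=
      fun b hb => by rw [Pi.single_eq_of_ne hb, mul_zero]
    have h2 : ∑ t, G.adjugate last2 t * (Pi.single last2 1 : Fin (m+2) → R) t
        = G.adjugate last2 last2 := by
      rw [Finset.sum_eq_single last2 (fun b _ hb => hz b hb)
        (fun hcon => absurd (Finset.mem_univ _) hcon), Pi.single_eq_same, mul_one]
    rw [h2] at h1
    rw [h1, ← Matrix.cramer_apply, cramer_single_last]
  -- the shifted vector
  set SX : Fin (m+2) → R :=
    fun t => if ht : (t : ℕ) = 0 then 0 else X ⟨(t : ℕ) - 1, by omega⟩ with hSX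
  have hSXsucc : ∀ t : Fin (m+1), SX t.succ = X t.castSucc := by
    intro t
    rw [hSX]
    simp only [Fin.val_succ]
    rw [dif_neg (by omega)]
    congr 1
  have hSXlast : SX last2 = X pre := by
    rw [hSX]
    simp only [hlast2v]
    rw [dif_neg (by omega)]
    congr 1
  have step1 : ∀ i, ∑ t, G i t * SX t
      = τ * k i - X last2 * h i + (if i = last2 then c else 0) := by
    intro i
    have hpeel : ∑ t, G i t * SX t
        = ∑ t : Fin (m+1), g ((i:ℕ) + (t:ℕ) + 1) * X t.castSucc := by
      rw [Fin.sum_univ_succ]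
      have h0 : SX 0 = 0 := by rw [hSX]; exact dif_pos rfl
      rw [h0, mul_zero, zero_add]
      refine Finset.sum_congr rfl fun t _ => ?_
      rw [hSXsucc t]
      congr 1
    by_cases hi : i = last2
    · subst hi
      rw [hpeel, if_pos rfl]
      have e1 : ∑ t : Fin (m+1), g (((last2:Fin (m+2)):ℕ) + (t:ℕ) + 1) * X t.castSucc
          = (∑ t, h t * X t) - h last2 * X last2 := by
        rw [Fin.sum_univ_castSucc (f := fun t : Fin (m+2) => h t * X t)]
        rw [add_sub_cancel_right]
        refine Finset.sum_congr rfl fun t _ => ?_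
        congr 1
        show g (((last2:Fin (m+2)):ℕ) + (t:ℕ) + 1) = g ((t.castSucc : ℕ) + (m+2))
        rw [hlast2v]
        congr 1
        simp only [Fin.coe_castSucc]
        omega
      rw [e1, hc]
      have e2 : k last2 = g (2*m+4) := by
        show g ((last2 : ℕ) + (m+3)) = g (2*m+4)
        rw [hlast2v]
        congr 1
        omega
      have e3 : h last2 = g (2*m+3) := by
        show g ((last2 : ℕ) + (m+2)) = g (2*m+3)
        rw [hlast2v]
        congr 1
        omega
      rw [e2, e3]
      ring
    · have hilt : (i:ℕ) < m+1 := by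
        have h1 := i.isLt
        have h2 : (i:ℕ) ≠ m+1 := fun hv => hi (Fin.ext (by rw [hlast2v]; exact hv))
        omega
      set i' : Fin (m+2) := ⟨(i:ℕ)+1, by omega⟩ with hi'
      have hi'v : (i' : ℕ) = (i : ℕ) + 1 := rfl
      have e2 := hGX i'
      rw [Fin.sum_univ_castSucc (f := fun t : Fin (m+2) => G i' t * X t)] at e2
      have e2' : ∑ t : Fin (m+1), G i' t.castSucc * X t.castSucc
          = ∑ t : Fin (m+1), g ((i:ℕ) + (t:ℕ) + 1) * X t.castSucc := by
        refine Finset.sum_congr rfl fun t _ => ?_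
        congr 1
        show g ((i' : ℕ) + (t.castSucc : ℕ)) = g ((i:ℕ) + (t:ℕ) + 1)
        congr 1
        simp only [Fin.coe_castSucc]
        omega
      rw [e2'] at e2
      have e4 : h i' = k i := by
        show g ((i' : ℕ) + (m+2)) = g ((i:ℕ) + (m+3))
        congr 1
        omega
      have e5 : G i' last2 = h i := by
        show g ((i' : ℕ) + (last2 : ℕ)) = g ((i:ℕ) + (m+2))
        rw [hlast2v]
        congr 1
        omega
      rw [e4, e5] at e2
      rw [hpeel, if_neg hi]
      linear_combination e2
  -- apply the adjugate
  have master : τ * X pre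
      = τ * (Hk g (m+2) (ohh (m+2))).det - X last2 * X last2
        + (Hk g (m+1) id).det * c := by
    have h1 := hAGw SX
    rw [Finset.sum_congr rfl (fun i _ => by rw [step1 i])] at h1
    rw [Finset.sum_congr rfl (fun i _ =>
      (by ring : G.adjugate last2 i *
          (τ * k i - X last2 * h i + (if i = last2 then c else 0))
        = τ * (G.adjugate last2 i * k i) - X last2 * (G.adjugate last2 i * h i)
          + G.adjugate last2 i * (if i = last2 then c else 0)))] at h1
    have hite : ∀ b : Fin (m+2), b ≠ last2 →
        G.adjugate last2 b * (if b = last2 then c else 0) = 0 :=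
      fun b hb => by rw [if_neg hb, mul_zero]
    rw [Finset.sum_add_distrib, Finset.sum_sub_distrib, ← Finset.mul_sum, ← Finset.mul_sum,
      Finset.sum_eq_single last2 (fun b _ hb => hite b hb)
        (fun hcon => absurd (Finset.mem_univ _) hcon), if_pos rfl] at h1
    rw [fact2 k last2, fact2 h last2, idk, hadjll] at h1
    have hXl : (G.updateCol last2 h).det = X last2 := rfl
    rw [hXl, hSXlast] at h1
    linear_combination -h1
  have hcB : c = - (Hk g (m+3) id).det := by
    have hfold : (∑ j, h j * X j)
        = ∑ j : Fin (m+2), g (j.val + (m+2)) *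
            ((G.updateCol j fun i => g (i.val + (m+2))).det) := rfl
    rw [hc, bordered g m, ← hG, ← htau, ← hfold]
    ring
  rw [idrho, idXl, hcB] at master
  linear_combination master

end LemC

/-- The Hankel determinants `τ n = det (g (i+j))` of the `g`-sequence satisfy
the Umemura/Toda recurrence `T_{n+1} T_{n-1} = (δ²T_n) T_n - (δT_n)² + (n δv + u) T_n²`;
in particular the solution of that recurrence with `T_0 = T_1 = 1` lies in `R`. -/
theorem umemura_polynomiality {R : Type*} [CommRing R]
    (δ : Derivation ℤ R R) (u v : R)
    (g : ℕ → R)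
    (hg0 : g 0 = 1)
    (hg : ∀ n : ℕ, g (n + 1) =
      δ (g n) + v * g n + u * ∑ i ∈ Finset.range n, g i * g (n - 1 - i))
    (T : ℕ → R)
    (hT : ∀ n : ℕ, T n = Matrix.det (Matrix.of fun i j : Fin n => g (i.val + j.val))) :
    T 0 = 1 ∧ T 1 = 1 ∧
    ∀ n : ℕ, T (n + 2) * T n =
      δ (δ (T (n + 1))) * T (n + 1) - (δ (T (n + 1))) ^ 2 +
        (((n : R) + 1) * δ v + u) * (T (n + 1)) ^ 2 := by
  have hTH : ∀ q, T q = (Hk g q id).det := fun q => hT q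
  have hT0 : T 0 = 1 := by rw [hT 0]; exact Matrix.det_fin_zero
  have hT1 : T 1 = 1 := by
    rw [hT 1, Matrix.det_fin_one]
    simpa using hg0
  refine ⟨hT0, hT1, ?_⟩
  intro n
  cases n with
  | zero =>
    have hg1 : g 1 = v := by
      have h1 := hg 0
      rw [hg0] at h1
      simpa [Derivation.map_one_eq_zero] using h1
    have hg2 : g 2 = δ v + v * v + u := by
      have h2 := hg 1
      rw [Finset.sum_range_one, hg1, hg0] at h2
      simpa using h2
    have hT2 : T 2 = δ v + u := by
      rw [hT 2, Matrix.det_fin_two]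
      show g (0 + 0) * g (1 + 1) - g (0 + 1) * g (1 + 0) = δ v + u
      norm_num [hg0, hg1, hg2]
      ring
    rw [hT0, hT1, hT2]
    simp [Derivation.map_one_eq_zero]
  | succ m =>
    have hA := lemA δ u v g hg m
    have hB := lemB δ u v g hg0 hg m
    have hC := lemC g m
    have hNv : δ (((m+2:ℕ):R) * v) = ((m+2:ℕ):R) * δ v := by
      rw [Derivation.leibniz, Derivation.map_natCast]
      simp
    have hprod : δ (((m+2:ℕ):R) * v * (Hk g (m+2) id).det)
        = ((m+2:ℕ):R) * v * δ ((Hk g (m+2) id).det)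
          + (Hk g (m+2) id).det * (((m+2:ℕ):R) * δ v) := by
      rw [Derivation.leibniz, hNv]
      simp only [smul_eq_mul]
    have hδδ : δ (δ ((Hk g (m+2) id).det))
        = ((Hk g (m+2) (orh (m+2))).det + (Hk g (m+2) (ohh (m+2))).det
            - ((m+2:ℕ):R) * v * (Hk g (m+2) (oh (m+2))).det - u * (Hk g (m+2) id).det)
          - (((m+2:ℕ):R) * v * ((Hk g (m+2) (oh (m+2))).det
              - ((m+2:ℕ):R) * v * (Hk g (m+2) id).det)
             + (Hk g (m+2) id).det * (((m+2:ℕ):R) * δ v)) := by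
      rw [hA, map_sub, hB, hprod, hA]
    show T (m+3) * T (m+1) = _
    rw [hTH (m+3), hTH (m+1), hTH (m+2), hδδ, hA]
    push_cast
    linear_combination hC
end

section
/- Painlevé II Bäcklund transformation s₁ preserves the form of the Hamiltonian system: if (q,p) solves q' = p − q² − t/2, p' = 2pq + α₁ and p is nowhere zero, then (q̃, p̃) = (q + α₁/p, p) solves q̃' = p̃ − q̃² − t/2, p̃' = 2p̃q̃ + (−α₁), i.e. the same system with parameter α₁ replaced by −α₁. -/
theorem painleve_II_backlund_s1
    (α₁ : ℝ) (q p : ℝ → ℝ)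
    (hq : Differentiable ℝ q) (hp : Differentiable ℝ p)
    (hpne : ∀ t : ℝ, p t ≠ 0)
    (hq' : ∀ t : ℝ, deriv q t = p t - (q t) ^ 2 - t / 2)
    (hp' : ∀ t : ℝ, deriv p t = 2 * p t * q t + α₁) :
    ∀ t : ℝ,
      deriv (fun s => q s + α₁ / p s) t =
        p t - (q t + α₁ / p t) ^ 2 - t / 2 ∧
      deriv p t = 2 * p t * (q t + α₁ / p t) + (-α₁) := by
  intro t
  constructor
  · have hd : deriv (fun s => q s + α₁ / p s) t
        = deriv q t + (0 * p t - α₁ * deriv p t) / (p t) ^ 2 := by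
      rw [deriv_fun_add (hq t)
        (((differentiableAt_const α₁).fun_div (hp t) (hpne t)))]
      rw [deriv_fun_div (differentiableAt_const α₁) (hp t) (hpne t), deriv_const]
    have h := hpne t
    rw [hd, hq' t, hp' t]
    field_simp
    ring
  · have h := hpne t
    rw [hp' t]
    field_simp
    ring
end
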